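/- In the category of assemblies on a pca A, a morphism f : (X,φ) → (Y,ψ) is a regular epimorphism if and only if f is surjective on underlying sets and ψ ≅ ∃_f(φ) (i.e., there are realizers witnessing ψ(y) ≤ ⋃_{f(x)=y} φ(x) and conversely). -/
import Mathlib


/-- A partial combinatory algebra. -/
structure Pca where
  carrier : Type
  app : carrier → carrier → Part carrier
  k : carrier
  s : carrier
  k_spec : ∀ x y : carrier, (app k x).bind (fun u => app u y) = Part.some x
  s_defined : ∀ a b : carrier, ((app s a).bind (fun u => app u b)).Dom
  s_spec : ∀ a b c : carrier,
    ((app a c).bind (fun u => (app b c).bind (fun v => app u v))).Dom →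
      (((app s a).bind (fun u => app u b)).bind (fun w => app w c)) =
        ((app a c).bind (fun u => (app b c).bind (fun v => app u v)))

/-- An assembly on a pca: a set with nonempty realizer sets. -/
structure Assembly (P : Pca) where
  carrier : Type
  real : carrier → Set P.carrier
  real_nonempty : ∀ x, (real x).Nonempty

/-- A function between assemblies is tracked if a single realizer sends realizers
of `x` to realizers of `f x`. -/
def Tracked {P : Pca} (X Y : Assembly P) (f : X.carrier → Y.carrier) : Prop :=
  ∃ r : P.carrier, ∀ x : X.carrier, ∀ a ∈ X.real x, ∃ b ∈ P.app r a, b ∈ Y.real (f x)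

/-- The realizability preorder on `T → Set A`. -/
def rle (P : Pca) {T : Type*} (φ ψ : T → Set P.carrier) : Prop :=
  ∃ r : P.carrier, ∀ x : T, ∀ a ∈ φ x, ∃ b ∈ P.app r a, b ∈ ψ x

/-- `f` is a regular epimorphism of assemblies: it is the coequalizer of some
parallel pair of tracked maps. -/
def IsRegEpiAsm {P : Pca} (X Y : Assembly P) (f : X.carrier → Y.carrier) : Prop :=
  ∃ (Z : Assembly P) (g h : Z.carrier → X.carrier),
    Tracked Z X g ∧ Tracked Z X h ∧
    (fun z => f (g z)) = (fun z => f (h z)) ∧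
    ∀ (W : Assembly P) (j : X.carrier → W.carrier), Tracked X W j →
      (fun z => j (g z)) = (fun z => j (h z)) →
      ∃! u : Y.carrier → W.carrier, Tracked Y W u ∧ (fun x => u (f x)) = j

namespace PcaAux

variable (P : Pca)

lemma k_total (x : P.carrier) : (P.app P.k x).Dom := by
  have h := P.k_spec x x
  have hx : x ∈ (P.app P.k x).bind fun u => P.app u x := by
    rw [h]; exact Part.mem_some x
  rcases Part.mem_bind_iff.mp hx with ⟨u, hu, _⟩
  exact Part.dom_iff_mem.mpr ⟨u, hu⟩

noncomputable def ka (x : P.carrier) : P.carrier := (P.app P.k x).get (k_total P x)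

lemma app_k (x : P.carrier) : P.app P.k x = Part.some (ka P x) :=
  (Part.some_get _).symm

lemma ka_spec (x y : P.carrier) : P.app (ka P x) y = Part.some x := by
  have h := P.k_spec x y
  rw [app_k, Part.bind_some] at h
  exact h

noncomputable def s2 (a b : P.carrier) : P.carrier :=
  ((P.app P.s a).bind fun u => P.app u b).get (P.s_defined a b)

lemma app_s2 (a b c : P.carrier)
    (h : ((P.app a c).bind fun u => (P.app b c).bind fun v => P.app u v).Dom) :
    P.app (s2 P a b) c = (P.app a c).bind fun u => (P.app b c).bind fun v => P.app u v := by
  have hs := P.s_spec a b c h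
  rw [← Part.some_get (P.s_defined a b), Part.bind_some] at hs
  exact hs

noncomputable def iC : P.carrier := s2 P P.k P.k

lemma app_i (a : P.carrier) : P.app (iC P) a = Part.some a := by
  have hd : ((P.app P.k a).bind fun u => (P.app P.k a).bind fun v => P.app u v).Dom := by
    rw [app_k, Part.bind_some, Part.bind_some, ka_spec]
    trivial
  rw [iC, app_s2 P _ _ _ hd, app_k, Part.bind_some, Part.bind_some, ka_spec]

/-- composition: `comp t r · a = t (r a)` -/
noncomputable def compC (t r : P.carrier) : P.carrier := s2 P (ka P t) r

lemma mem_comp {t r a b c : P.carrier} (hb : b ∈ P.app r a) (hc : c ∈ P.app t b) :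
    c ∈ P.app (compC P t r) a := by
  have heval : (P.app (ka P t) a).bind (fun u => (P.app r a).bind fun v => P.app u v)
      = (P.app r a).bind fun v => P.app t v := by
    rw [ka_spec, Part.bind_some]
  have hd : ((P.app (ka P t) a).bind fun u => (P.app r a).bind fun v => P.app u v).Dom := by
    rw [heval]
    exact Part.dom_iff_mem.mpr ⟨c, Part.mem_bind_iff.mpr ⟨b, hb, hc⟩⟩
  rw [compC, app_s2 P _ _ _ hd, heval]
  exact Part.mem_bind_iff.mpr ⟨b, hb, hc⟩

/-- pairing -/
noncomputable def pairC (a b : P.carrier) : P.carrier :=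
  s2 P (s2 P (iC P) (ka P a)) (ka P b)

lemma app_inner (a z : P.carrier) (h : (P.app z a).Dom) :
    P.app (s2 P (iC P) (ka P a)) z = P.app z a := by
  have hd : ((P.app (iC P) z).bind fun u => (P.app (ka P a) z).bind fun v => P.app u v).Dom := by
    rw [app_i, Part.bind_some, ka_spec, Part.bind_some]
    exact h
  rw [app_s2 P _ _ _ hd, app_i, Part.bind_some, ka_spec, Part.bind_some]

lemma app_pair (a b z : P.carrier) (h : ((P.app z a).bind fun u => P.app u b).Dom) :
    P.app (pairC P a b) z = (P.app z a).bind fun u => P.app u b := by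
  have hza : (P.app z a).Dom := by
    rcases Part.dom_iff_mem.mp h with ⟨c, hc⟩
    rcases Part.mem_bind_iff.mp hc with ⟨u, hu, _⟩
    exact Part.dom_iff_mem.mpr ⟨u, hu⟩
  have hd : ((P.app (s2 P (iC P) (ka P a)) z).bind
      fun u => (P.app (ka P b) z).bind fun v => P.app u v).Dom := by
    rw [app_inner P a z hza, ka_spec]
    simpa using h
  rw [pairC, app_s2 P _ _ _ hd, app_inner P a z hza, ka_spec]
  simp

noncomputable def fstC : P.carrier := s2 P (iC P) (ka P P.k)

noncomputable def sndC : P.carrier := s2 P (iC P) (ka P (ka P (iC P)))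

lemma fst_pair (a b : P.carrier) : P.app (fstC P) (pairC P a b) = Part.some a := by
  have h1 : (P.app (pairC P a b)) P.k = Part.some a := by
    rw [app_pair P a b P.k]
    · rw [app_k, Part.bind_some, ka_spec]
    · rw [app_k, Part.bind_some, ka_spec]; trivial
  have hd : ((P.app (iC P) (pairC P a b)).bind
      fun u => (P.app (ka P P.k) (pairC P a b)).bind fun v => P.app u v).Dom := by
    rw [app_i, Part.bind_some, ka_spec, Part.bind_some, h1]; trivial
  rw [fstC, app_s2 P _ _ _ hd, app_i, Part.bind_some, ka_spec, Part.bind_some, h1]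

lemma snd_pair (a b : P.carrier) : P.app (sndC P) (pairC P a b) = Part.some b := by
  have h1 : (P.app (pairC P a b)) (ka P (iC P)) = Part.some b := by
    rw [app_pair P a b _]
    · rw [ka_spec, Part.bind_some, app_i]
    · rw [ka_spec, Part.bind_some, app_i]; trivial
  have hd : ((P.app (iC P) (pairC P a b)).bind
      fun u => (P.app (ka P (ka P (iC P))) (pairC P a b)).bind fun v => P.app u v).Dom := by
    rw [app_i, Part.bind_some, ka_spec, Part.bind_some, h1]; trivial
  rw [sndC, app_s2 P _ _ _ hd, app_i, Part.bind_some, ka_spec, Part.bind_some, h1]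

end PcaAux

/-- a tracked map `f : (X,φ) → (Y,ψ)` is a regular epimorphism of
assemblies iff it is surjective and `ψ ≅ ∃_f(φ)` in the realizability preorder. -/
theorem stmt_5 (P : Pca) (X Y : Assembly P) (f : X.carrier → Y.carrier)
    (hf : Tracked X Y f) :
    IsRegEpiAsm X Y f ↔
      Function.Surjective f ∧
      rle P Y.real (fun y => {a | ∃ x : X.carrier, f x = y ∧ a ∈ X.real x}) ∧
      rle P (fun y => {a | ∃ x : X.carrier, f x = y ∧ a ∈ X.real x}) Y.real := by
  classical
  open PcaAux in
  constructor
  · rintro ⟨Z, g, h, tg, th, heq, huniv⟩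
    -- surjectivity
    have hsurj : Function.Surjective f := by
      set W : Assembly P := ⟨Bool, fun _ => {P.k}, fun _ => ⟨P.k, rfl⟩⟩ with hW
      have trk : ∀ (T : Assembly P) (j : T.carrier → Bool), Tracked T W j := by
        intro T j
        exact ⟨ka P P.k, fun x a _ => ⟨P.k, by rw [ka_spec]; exact Part.mem_some _, rfl⟩⟩
      obtain ⟨u, -, huniq⟩ := huniv W (fun _ => true) (trk X _) rfl
      have e1 : (fun _ => true : Y.carrier → Bool) = u := huniq _ ⟨trk Y _, rfl⟩
      have e2 : (fun y => if ∃ x, f x = y then true else false : Y.carrier → Bool) = u := by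
        refine huniq _ ⟨trk Y _, ?_⟩
        funext x
        exact if_pos ⟨x, rfl⟩
      intro y
      by_contra hc
      push_neg at hc
      have hif := (congrFun e2 y).trans (congrFun e1 y).symm
      rw [if_neg (by push_neg; exact fun x => hc x)] at hif
      simp at hif
    refine ⟨hsurj, ?_, ?_⟩
    · -- ψ ≤ ∃_f φ
      have hne : ∀ y : Y.carrier,
          ({a | ∃ x : X.carrier, f x = y ∧ a ∈ X.real x} : Set P.carrier).Nonempty := by
        intro y
        obtain ⟨x, hx⟩ := hsurj y
        obtain ⟨a, ha⟩ := X.real_nonempty x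
        exact ⟨a, x, hx, ha⟩
      set W : Assembly P :=
        ⟨Y.carrier, fun y => {a | ∃ x : X.carrier, f x = y ∧ a ∈ X.real x}, hne⟩ with hWdef
      have tj : Tracked X W f :=
        ⟨iC P, fun x a ha =>
          ⟨a, by rw [app_i]; exact Part.mem_some _, ⟨x, rfl, ha⟩⟩⟩
      obtain ⟨u, ⟨⟨r, hr⟩, hueq⟩, -⟩ := huniv W f tj heq
      have hu_id : ∀ y, u y = y := by
        intro y
        obtain ⟨x, hx⟩ := hsurj y
        have := congrFun hueq x
        simpa [hx] using this
      refine ⟨r, fun y a ha => ?_⟩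
      obtain ⟨b, hb, hbm⟩ := hr y a ha
      rw [hu_id y] at hbm
      exact ⟨b, hb, hbm⟩
    · -- ∃_f φ ≤ ψ, from f tracked
      obtain ⟨rf, hrf⟩ := hf
      refine ⟨rf, fun y a ha => ?_⟩
      obtain ⟨x, hx, hax⟩ := ha
      obtain ⟨b, hb, hbf⟩ := hrf x a hax
      exact ⟨b, hb, hx ▸ hbf⟩
  · rintro ⟨hsurj, ⟨rψ, hrψ⟩, -⟩
    choose σ hσ using hsurj
    refine ⟨⟨{p : X.carrier × X.carrier // f p.1 = f p.2},
        fun z => {c | ∃ a ∈ X.real z.1.1, ∃ b ∈ X.real z.1.2, c = pairC P a b}, ?_⟩,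
      fun z => z.1.1, fun z => z.1.2, ?_, ?_, ?_, ?_⟩
    · intro z
      obtain ⟨a, ha⟩ := X.real_nonempty z.1.1
      obtain ⟨b, hb⟩ := X.real_nonempty z.1.2
      exact ⟨pairC P a b, a, ha, b, hb, rfl⟩
    · refine ⟨fstC P, fun z c hc => ?_⟩
      obtain ⟨a, ha, b, hb, rfl⟩ := hc
      exact ⟨a, by rw [fst_pair]; exact Part.mem_some _, ha⟩
    · refine ⟨sndC P, fun z c hc => ?_⟩
      obtain ⟨a, ha, b, hb, rfl⟩ := hc
      exact ⟨b, by rw [snd_pair]; exact Part.mem_some _, hb⟩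
    · funext z
      exact z.2
    · intro W j tj hj
      obtain ⟨t, ht⟩ := tj
      have hfib : ∀ x x' : X.carrier, f x = f x' → j x = j x' := by
        intro x x' hxx
        exact congrFun hj ⟨(x, x'), hxx⟩
      refine ⟨fun y => j (σ y), ⟨?_, ?_⟩, ?_⟩
      · refine ⟨compC P t rψ, fun y a ha => ?_⟩
        obtain ⟨b, hb, hbm⟩ := hrψ y a ha
        obtain ⟨x, hx, hbx⟩ := hbm
        obtain ⟨c, hc, hcw⟩ := ht x b hbx
        refine ⟨c, mem_comp P hb hc, ?_⟩
        rwa [hfib x (σ y) (by rw [hx, hσ])] at hcw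
      · funext x
        exact hfib _ _ (hσ (f x))
      · rintro u' ⟨-, hu'⟩
        funext y
        have := congrFun hu' (σ y)
        rw [hσ] at this
        exact this
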